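/- Let z₁ and z₂ be nonzero elements of the degree-2 part of F with z₁·z₂ = 0 in F. Then there exist λ₁, λ₂ ∈ ℂ* such that either z₁ = λ₁·x₊ and z₂ = λ₂·x₋, or z₁ = λ₁·x₋ and z₂ = λ₂·x₊, where x₊ = x₁ + ½(1 + √−3)·x₂ and x₋ = x₁ + ½(1 − √−3)·x₂. -/

import Mathlib

noncomputable section

open MvPolynomial

/-- The relations ideal for the cohomology of the flag manifold `SU(3)/T`. -/
def Frel : Ideal (MvPolynomial (Fin 2) ℂ) :=
  Ideal.span {X 0 ^ 2 + X 1 ^ 2 + X 0 * X 1, X 0 ^ 2 * X 1 + X 0 * X 1 ^ 2}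

/-- `F = ℂ[x₁,x₂]/(x₁²+x₂²+x₁x₂, x₁²x₂+x₁x₂²)`. -/
abbrev F := MvPolynomial (Fin 2) ℂ ⧸ Frel

def x₁ : F := Ideal.Quotient.mk Frel (X 0)
def x₂ : F := Ideal.Quotient.mk Frel (X 1)

/-- The degree-2 part of `F`. -/
def deg2F : Submodule ℂ F := Submodule.span ℂ {x₁, x₂}

/-- The relations ideal for `H_u = F[y]/(y² + u·y)`. -/
def Hrel (u : F) : Ideal (Polynomial F) :=
  Ideal.span {Polynomial.X ^ 2 + Polynomial.C u * Polynomial.X}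

instance (u : F) : (Hrel u).IsTwoSided :=
  @Ideal.instIsTwoSided_1 _ (@Polynomial.commRing F (Ideal.Quotient.commRing Frel)) (Hrel u)

/-- `H_u = F[y]/(y² + u·y)`. -/
abbrev H (u : F) := Polynomial F ⧸ Hrel u

/-- The class `y` in `H_u`. -/
def yH (u : F) : H u := Ideal.Quotient.mk (Hrel u) Polynomial.X

/-- The canonical map `F → H_u`, as a `ℂ`-algebra homomorphism. -/
def ιH (u : F) : F →ₐ[ℂ] H u :=
  (Ideal.Quotient.mkₐ ℂ (Hrel u)).comp (IsScalarTower.toAlgHom ℂ F (Polynomial F))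

/-- The degree-2 part of `H_u`. -/
def deg2H (u : F) : Submodule ℂ (H u) :=
  Submodule.span ℂ {ιH u x₁, ιH u x₂, yH u}

/-- `ω` acts on degree 2 by the matrix `(a₁₁ a₁₂; a₂₁ a₂₂)`. -/
def actsAs (ω : F ≃ₐ[ℂ] F) (a₁₁ a₁₂ a₂₁ a₂₂ : ℂ) : Prop :=
  ω x₁ = a₁₁ • x₁ + a₂₁ • x₂ ∧ ω x₂ = a₁₂ • x₁ + a₂₂ • x₂

/-- Membership in the Weyl group `W` (the six listed automorphisms). -/
def InW (ω : F ≃ₐ[ℂ] F) : Prop :=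
  actsAs ω 1 0 0 1 ∨ actsAs ω 0 1 1 0 ∨ actsAs ω (-1) 0 (-1) 1 ∨
    actsAs ω 1 (-1) 0 (-1) ∨ actsAs ω 0 (-1) 1 (-1) ∨ actsAs ω (-1) 1 (-1) 0

/-!
Write `zᵢ = aᵢ x₁ + bᵢ x₂`. In degree 2 the relation ideal consists of the multiples of
`x₁² + x₁x₂ + x₂²` (the cubic relation and all higher multiples contribute nothing there), so
`z₁ z₂ = 0` says that `(a₁X + b₁Y)(a₂X + b₂Y)` is a multiple of
`X² + XY + Y² = (X + μ₊Y)(X + μ₋Y)`, `μ± = (1 ± √−3)/2`. Hence each factor is proportional to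
`X + μ₊Y` or to `X + μ₋Y`, and the two factors cannot both be proportional to the same one
because `μ₊ ≠ μ₋`.
-/

section QuadricFactors

variable {K : Type*} [Field K]

theorem eq_mul_or_eq_mul_of_sq_sub_mul_add_sq_eq_zero {a b s : K} (h2 : (2 : K) ≠ 0)
    (hs : s ^ 2 = -3) (h : b ^ 2 - a * b + a ^ 2 = 0) :
    b = (1 + s) / 2 * a ∨ b = (1 - s) / 2 * a := by
  have hfac : (2 * b - (1 + s) * a) * (2 * b - (1 - s) * a) = 0 := by
    linear_combination 4 * h - a ^ 2 * hs
  rcases mul_eq_zero.mp hfac with hroot | hroot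
  · left; field_simp; linear_combination hroot
  · right; field_simp; linear_combination hroot

/-- `(a₁X + b₁Y)(a₂X + b₂Y)` is a scalar multiple of `X² + XY + Y²`. -/
def ProdIsQuadricMultiple (a₁ b₁ a₂ b₂ : K) : Prop :=
  a₁ * a₂ = a₁ * b₂ + a₂ * b₁ ∧ b₁ * b₂ = a₁ * b₂ + a₂ * b₁

namespace ProdIsQuadricMultiple

variable {a₁ b₁ a₂ b₂ : K}

theorem symm (h : ProdIsQuadricMultiple a₁ b₁ a₂ b₂) : ProdIsQuadricMultiple a₂ b₂ a₁ b₁ :=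
  ⟨by linear_combination h.1, by linear_combination h.2⟩

theorem fst_ne_zero (h : ProdIsQuadricMultiple a₁ b₁ a₂ b₂)
    (hab₁ : (a₁, b₁) ≠ 0) (hab₂ : (a₂, b₂) ≠ 0) : a₁ ≠ 0 := by
  rintro rfl
  have hb₁ : b₁ ≠ 0 := fun hb₁ => hab₁ (by simp [hb₁])
  have ha₂ : a₂ = 0 := (mul_eq_zero_iff_right hb₁).mp (by linear_combination -h.1)
  have hb₂ : b₂ = 0 := (mul_eq_zero_iff_left hb₁).mp (by linear_combination h.2 + b₁ * ha₂)
  exact hab₂ (by simp [ha₂, hb₂])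

theorem sq_sub_mul_add_sq_eq_zero (h : ProdIsQuadricMultiple a₁ b₁ a₂ b₂) (ha₂ : a₂ ≠ 0) :
    b₁ ^ 2 - a₁ * b₁ + a₁ ^ 2 = 0 :=
  (mul_eq_zero_iff_left ha₂).mp (by linear_combination (a₁ - b₁) * h.1 - a₁ * h.2)

theorem two_mul_eq_one_of_proportional (h : ProdIsQuadricMultiple a₁ b₁ a₂ b₂)
    (ha₁ : a₁ ≠ 0) (ha₂ : a₂ ≠ 0) {μ : K} (hb₁ : b₁ = μ * a₁) (hb₂ : b₂ = μ * a₂) :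
    2 * μ = 1 := by
  have : a₁ * a₂ * (2 * μ - 1) = 0 := by
    subst hb₁ hb₂
    linear_combination -h.1
  exact sub_eq_zero.mp ((mul_eq_zero_iff_left (mul_ne_zero ha₁ ha₂)).mp this)

theorem eq_root_mul {s : K} (h2 : (2 : K) ≠ 0) (h3 : (3 : K) ≠ 0) (hs : s ^ 2 = -3)
    (h : ProdIsQuadricMultiple a₁ b₁ a₂ b₂) (hab₁ : (a₁, b₁) ≠ 0) (hab₂ : (a₂, b₂) ≠ 0) :
    a₁ ≠ 0 ∧ a₂ ≠ 0 ∧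
      ((b₁ = (1 + s) / 2 * a₁ ∧ b₂ = (1 - s) / 2 * a₂) ∨
        (b₁ = (1 - s) / 2 * a₁ ∧ b₂ = (1 + s) / 2 * a₂)) := by
  have ha₁ := h.fst_ne_zero hab₁ hab₂
  have ha₂ := h.symm.fst_ne_zero hab₂ hab₁
  have hs0 : s ≠ 0 := by
    rintro rfl
    exact h3 (by linear_combination hs)
  refine ⟨ha₁, ha₂, ?_⟩
  rcases eq_mul_or_eq_mul_of_sq_sub_mul_add_sq_eq_zero h2 hs
      (h.sq_sub_mul_add_sq_eq_zero ha₂) with hb₁ | hb₁ <;>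
    rcases eq_mul_or_eq_mul_of_sq_sub_mul_add_sq_eq_zero h2 hs
      (h.symm.sq_sub_mul_add_sq_eq_zero ha₁) with hb₂ | hb₂
  · have hμ := h.two_mul_eq_one_of_proportional ha₁ ha₂ hb₁ hb₂
    field_simp at hμ
    exact absurd (by linear_combination hμ) hs0
  · exact Or.inl ⟨hb₁, hb₂⟩
  · exact Or.inr ⟨hb₁, hb₂⟩
  · have hμ := h.two_mul_eq_one_of_proportional ha₁ ha₂ hb₁ hb₂
    field_simp at hμ
    exact absurd (by linear_combination -hμ) hs0

end ProdIsQuadricMultiple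

end QuadricFactors

theorem coeff_sq_eq_coeff_mul_of_mem_Frel {p : MvPolynomial (Fin 2) ℂ} (hp : p ∈ Frel)
    (i : Fin 2) :
    coeff (Finsupp.single i 2) p = coeff (Finsupp.single 0 1 + Finsupp.single 1 1) p := by
  obtain ⟨f, g, rfl⟩ := Ideal.mem_span_pair.mp hp
  fin_cases i <;>
    simp [X, monomial_pow, monomial_mul, mul_add, coeff_mul_monomial',
      Finsupp.le_def, Finsupp.single_apply, Fin.forall_fin_two]

theorem smul_x₁_add_smul_x₂ (a b : ℂ) :
    a • x₁ + b • x₂ = Ideal.Quotient.mk Frel (C a * X 0 + C b * X 1) := by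
  rw [x₁, x₂, ← Ideal.Quotient.mkₐ_eq_mk ℂ, ← map_smul, ← map_smul, ← map_add, smul_eq_C_mul,
    smul_eq_C_mul]

theorem prodIsQuadricMultiple_of_mul_eq_zero {a₁ b₁ a₂ b₂ : ℂ}
    (h : (a₁ • x₁ + b₁ • x₂) * (a₂ • x₁ + b₂ • x₂) = 0) :
    ProdIsQuadricMultiple a₁ b₁ a₂ b₂ := by
  rw [smul_x₁_add_smul_x₂, smul_x₁_add_smul_x₂, ← map_mul,
    Ideal.Quotient.eq_zero_iff_mem] at h
  have hexpand : ((C a₁ * X 0 + C b₁ * X 1) * (C a₂ * X 0 + C b₂ * X 1) :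
      MvPolynomial (Fin 2) ℂ) =
      monomial (Finsupp.single 0 2) (a₁ * a₂) +
        monomial (Finsupp.single 0 1 + Finsupp.single 1 1) (a₁ * b₂ + a₂ * b₁) +
        monomial (Finsupp.single 1 2) (b₁ * b₂) := by
    simp only [X, C_mul_monomial, add_mul, mul_add, monomial_mul, ← Finsupp.single_add,
      add_comm (Finsupp.single (1 : Fin 2) 1), map_add, mul_one, one_add_one_eq_two]
    rw [mul_comm b₁ a₂]
    abel
  rw [hexpand] at h
  simpa [ProdIsQuadricMultiple, coeff_monomial, Finsupp.ext_iff, Finsupp.single_apply,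
    Fin.forall_fin_two] using coeff_sq_eq_coeff_mul_of_mem_Frel h

/-- If `z₁, z₂` are nonzero elements of the degree-2 part of `F` with
`z₁·z₂ = 0`, then (up to swapping the roles of `x₊` and `x₋`) `z₁ = λ₁·x₊` and
`z₂ = λ₂·x₋` for some `λ₁, λ₂ ∈ ℂ*`, where `x₊ = x₁ + ½(1+√−3)·x₂` and
`x₋ = x₁ + ½(1−√−3)·x₂` and `√−3` is a fixed square root of `−3`. -/
theorem stmt7 (s : ℂ) (hs : s ^ 2 = -3) (z₁ z₂ : F)
    (hz₁ : z₁ ∈ deg2F) (hz₂ : z₂ ∈ deg2F) (hz₁0 : z₁ ≠ 0) (hz₂0 : z₂ ≠ 0)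
    (hmul : z₁ * z₂ = 0) :
    ∃ lam₁ lam₂ : ℂ, lam₁ ≠ 0 ∧ lam₂ ≠ 0 ∧
      ((z₁ = lam₁ • (x₁ + ((1 + s) / 2) • x₂) ∧ z₂ = lam₂ • (x₁ + ((1 - s) / 2) • x₂)) ∨
       (z₁ = lam₁ • (x₁ + ((1 - s) / 2) • x₂) ∧ z₂ = lam₂ • (x₁ + ((1 + s) / 2) • x₂))) := by
  rw [deg2F, Submodule.mem_span_pair] at hz₁ hz₂
  obtain ⟨a₁, b₁, rfl⟩ := hz₁
  obtain ⟨a₂, b₂, rfl⟩ := hz₂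
  have coeffs_ne_zero {a b : ℂ} (hz : a • x₁ + b • x₂ ≠ 0) : (a, b) ≠ 0 := by
    intro hab
    obtain ⟨rfl, rfl⟩ := Prod.mk_eq_zero.mp hab
    simp at hz
  have factor {a b μ : ℂ} (hb : b = μ * a) : a • x₁ + b • x₂ = a • (x₁ + μ • x₂) := by
    rw [hb, smul_add, smul_smul, mul_comm]
  obtain ⟨ha₁, ha₂, hroots⟩ := (prodIsQuadricMultiple_of_mul_eq_zero hmul).eq_root_mul
    two_ne_zero three_ne_zero hs (coeffs_ne_zero hz₁0) (coeffs_ne_zero hz₂0)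
  refine ⟨a₁, a₂, ha₁, ha₂, ?_⟩
  rcases hroots with ⟨hb₁, hb₂⟩ | ⟨hb₁, hb₂⟩
  · exact Or.inl ⟨factor hb₁, factor hb₂⟩
  · exact Or.inr ⟨factor hb₁, factor hb₂⟩
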